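/- arXiv:1402.2632 — 2 statements merged into one kernel-verified Lean document; each statement's English description precedes it below -/
import Mathlib

section
/- Let f : ℕ → ℤ satisfy f(n+1) ≥ f(n) - 1 for all n. For i ∈ ℕ define σ(i) to be the least j > i with f(j) < f(i), when such j exists. If i < k and both σ(i) and σ(k) exist, then either σ(i) ≤ k or σ(k) ≤ σ(i). -/
/-- Non-crossing property of the first-passage matching: if `σ i` is the least `j > i` with
`f j < f i`, and `i < k`, then either `σ i ≤ k` or `σ k ≤ σ i`. -/
theorem first_passage_noncrossing
    (f : ℕ → ℤ) (hf : ∀ n : ℕ, f (n + 1) ≥ f n - 1)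
    (i k si sk : ℕ)
    (hsi_gt : i < si) (hsi_lt : f si < f i)
    (hsi_least : ∀ j : ℕ, i < j → f j < f i → si ≤ j)
    (hik : i < k)
    (hsk_gt : k < sk) (hsk_lt : f sk < f k)
    (hsk_least : ∀ j : ℕ, k < j → f j < f k → sk ≤ j) :
    si ≤ k ∨ sk ≤ si := by
  rcases le_or_gt si k with h | h
  · exact Or.inl h
  · right
    have hfk : f i ≤ f k := by
      by_contra hc
      exact absurd (hsi_least k hik (lt_of_not_ge hc)) (not_le.mpr h)
    exact hsk_least si h (lt_of_lt_of_le hsi_lt hfk)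
end

section
/- Let f : ℤ → ℤ satisfy f(n+1) ≥ f(n) - 1 for all n ∈ ℤ. For i ∈ ℤ define σ(i) to be the least j > i with f(j) < f(i), when such j exists. Fix j ∈ ℤ and suppose there exists m < j with f(m) < f(j). Then the set {i ∈ ℤ : σ(i) exists and σ(i) = j} is finite. -/
/-- For a bi-infinite sequence with increments bounded below by `-1`, if there is some
`m < j` with `f m < f j`, then only finitely many indices `i` have first-passage index
`σ i = j` (where `σ i` is the least `l > i` with `f l < f i`). -/
theorem first_passage_preimage_finite
    (f : ℤ → ℤ) (hf : ∀ n : ℤ, f (n + 1) ≥ f n - 1)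
    (j : ℤ) (m : ℤ) (hm : m < j) (hfm : f m < f j) :
    Set.Finite {i : ℤ | i < j ∧ f j < f i ∧ ∀ l : ℤ, i < l → f l < f i → j ≤ l} := by
  apply Set.Finite.subset (Set.finite_Icc m j)
  rintro i ⟨h1, h2, h3⟩
  refine ⟨?_, h1.le⟩
  by_contra h
  push_neg at h
  exact absurd (h3 m h (lt_trans hfm h2)) (not_le.mpr hm)
end
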